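/- arXiv:1901.05535 — 3 statements merged into one kernel-verified Lean document; each statement's English description precedes it below -/
import Mathlib

section
/- The function t ↦ t^(-2)(1 - cos t) is monotonically decreasing on the interval (0, π): for all 0 < t₁ < t₂ < π, one has t₁^(-2)(1 - cos t₁) ≥ t₂^(-2)(1 - cos t₂). -/
open Real

/-! Writing `1 - cos t = 2 sin² (t/2)` gives `t⁻² (1 - cos t) = (sin s / s)² / 2` with `s = t/2`,
so it suffices that `sin s / s` is decreasing and positive on `(0, π/2)`. The monotonicity holds on
all of `(0, π]`: `sin s / s` is the slope of the secant of `sin` through `0`, and `sin` is concave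
on `[0, π]`. -/

theorem Real.strictAntiOn_sin_div_self : StrictAntiOn (fun x => sin x / x) (Set.Ioc 0 π) := by
  intro x ⟨hx, hxπ⟩ y ⟨hy, hyπ⟩ hxy
  have hmem : ∀ {z}, 0 ≤ z → z ≤ π → z ∈ Set.Icc 0 π := fun h₀ h₁ => ⟨h₀, h₁⟩
  simpa using strictConcaveOn_sin_Icc.secant_strict_mono (hmem le_rfl pi_pos.le)
    (hmem hx.le hxπ) (hmem hy.le hyπ) hx.ne' hy.ne' hxy

theorem Real.one_sub_cos_eq_two_mul_sin_half_sq (x : ℝ) : 1 - cos x = 2 * sin (x / 2) ^ 2 := by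
  rw [sin_sq, cos_sq, show 2 * (x / 2) = x by ring]
  ring

theorem Real.rpow_neg_two_mul_one_sub_cos {t : ℝ} (ht : 0 < t) :
    t ^ (-2 : ℝ) * (1 - cos t) = (sin (t / 2) / (t / 2)) ^ 2 / 2 := by
  rw [rpow_neg ht.le, rpow_two, one_sub_cos_eq_two_mul_sin_half_sq]
  field_simp

/-- The function `t ↦ t^(-2) (1 - cos t)` is monotonically decreasing on `(0, π)`. -/
theorem stmt_2 (t₁ t₂ : ℝ) (h₁ : 0 < t₁) (h₁₂ : t₁ < t₂) (h₂ : t₂ < Real.pi) :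
    t₂ ^ (-2 : ℝ) * (1 - Real.cos t₂) ≤ t₁ ^ (-2 : ℝ) * (1 - Real.cos t₁) := by
  have h₂₀ : 0 < t₂ := h₁.trans h₁₂
  have hsin_pos : 0 ≤ sin (t₂ / 2) / (t₂ / 2) :=
    div_nonneg (sin_nonneg_of_nonneg_of_le_pi (by linarith) (by linarith)) (by linarith)
  have hanti : sin (t₂ / 2) / (t₂ / 2) ≤ sin (t₁ / 2) / (t₁ / 2) :=
    (strictAntiOn_sin_div_self ⟨by linarith, by linarith⟩ ⟨by linarith, by linarith⟩
      (by linarith)).le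
  rw [rpow_neg_two_mul_one_sub_cos h₁, rpow_neg_two_mul_one_sub_cos h₂₀]
  gcongr
end

section
/- Let H and U be separable real Hilbert spaces, 𝕌 ⊆ U an orthonormal basis, r ∈ (0,∞), T a continuous bilinear form on H, A a Schatten-(1+r) operator from U to H, and B a Schatten-(1+1/r) operator from U to H. Then Σ_{u ∈ 𝕌} |T(Au, Bu)| ≤ ‖T‖ · ‖A‖_{S_{1+r}} · ‖B‖_{S_{1+1/r}}, where ‖T‖ is the operator norm of the bilinear form and ‖·‖_{S_p} denotes the Schatten-p norm. -/
open scoped RealInnerProductSpace ENNReal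

/-- The Schatten-`p` norm of a continuous linear operator between real Hilbert spaces,
defined through the variational characterisation
`‖A‖_{S_p} = sup (Σᵢ |⟪A eᵢ, fᵢ⟫|^p)^{1/p}`, the supremum being taken over all finite
orthonormal families `(eᵢ)` in `U` and `(fᵢ)` in `H`. -/
noncomputable def schattenNorm {U H : Type*}
    [NormedAddCommGroup U] [InnerProductSpace ℝ U]
    [NormedAddCommGroup H] [InnerProductSpace ℝ H]
    (p : ℝ) (A : U →L[ℝ] H) : ℝ≥0∞ :=
  ⨆ (n : ℕ) (e : Fin n → U) (f : Fin n → H) (_ : Orthonormal ℝ e) (_ : Orthonormal ℝ f),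
    ENNReal.ofReal ((∑ i, |⟪A (e i), f i⟫| ^ p) ^ (1 / p))

/-!
Only finite partial sums matter, and flipping the sign of the basis vectors `u` with
`T (A u) (B u) < 0` reduces the claim to `∑ₖ T (A xₖ) (B yₖ) ≤ ‖T‖ ‖A‖_p ‖B‖_q` for finite
orthonormal families `x`, `y`, where `p = 1 + r` and `q = 1 + 1/r` are Hölder conjugate.

Diagonalising the Gram matrices of `(A xₖ)` and `(B yₖ)` gives orthogonal matrices `φ`, `χ`
such that `eₐ = ∑ₖ φₐₖ xₖ` and `f_b = ∑ₖ χ_bₖ yₖ` are orthonormal, `A eₐ` and `B f_b` are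
pairwise orthogonal, and `∑ₖ T (A xₖ) (B yₖ) = ∑_{a,b} ⟪φₐ, χ_b⟫ T (A eₐ) (B f_b)`.
Write `A eₐ = ‖A eₐ‖ ψₐ` and `B f_b = ‖B f_b‖ ω_b`. By Bessel's inequality both matrices
`⟪φₐ, χ_b⟫` and `T ψₐ ω_b / ‖T‖` have rows and columns of `ℓ²`-norm at most one, so their
entrywise product is dominated by the doubly substochastic matrix of half their sums of
squares, and Hölder's inequality (the Schur test) bounds the double sum by
`‖T‖ (∑ ‖A eₐ‖ᵖ)^{1/p} (∑ ‖B f_b‖^q)^{1/q}`. The two factors are bounded by the Schatten norms,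
as witnessed by the orthonormal pairs `(eₐ, ψₐ)` and `(f_b, ω_b)`.
-/

section OrthogonalFamily

variable {ι E : Type*} [Fintype ι] [NormedAddCommGroup E] [InnerProductSpace ℝ E]

theorem inner_sum_smul_self_of_pairwise {w : ι → E} (hw : Pairwise fun i j => ⟪w i, w j⟫ = 0)
    (c : ι → ℝ) : ⟪∑ i, c i • w i, ∑ i, c i • w i⟫ = ∑ i, c i ^ 2 * ‖w i‖ ^ 2 := by
  classical
  simp only [sum_inner, inner_sum, real_inner_smul_left, real_inner_smul_right]
  refine Finset.sum_congr rfl fun i _ => ?_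
  rw [Finset.sum_eq_single i (fun j _ hji => by rw [hw hji]; ring) (by simp),
    real_inner_self_eq_norm_sq]
  ring

theorem ContinuousLinearMap.sum_sq_apply_le_opNorm_sq (f : E →L[ℝ] ℝ) {w : ι → E}
    (hw : Pairwise fun i j => ⟪w i, w j⟫ = 0) (hw₁ : ∀ i, ‖w i‖ ≤ 1) :
    ∑ i, f (w i) ^ 2 ≤ ‖f‖ ^ 2 := by
  set S := ∑ i, f (w i) ^ 2
  set y := ∑ i, f (w i) • w i
  have hfy : f y = S := by simp [y, S, sq]
  have hy : ‖y‖ ^ 2 ≤ S := by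
    rw [← real_inner_self_eq_norm_sq, inner_sum_smul_self_of_pairwise hw]
    refine Finset.sum_le_sum fun i _ => mul_le_of_le_one_right (sq_nonneg _) ?_
    exact pow_le_one₀ (norm_nonneg _) (hw₁ i)
  have hS : S ≤ ‖f‖ * ‖y‖ := hfy ▸ (le_abs_self _).trans (f.le_opNorm y)
  have hS₀ : 0 ≤ S := Finset.sum_nonneg fun i _ => sq_nonneg _
  nlinarith [norm_nonneg f, norm_nonneg y]

end OrthogonalFamily

theorem NormedSpace.norm_normalize_le_one {V : Type*} [NormedAddCommGroup V]
    [NormedSpace ℝ V] (x : V) : ‖NormedSpace.normalize x‖ ≤ 1 := by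
  rcases eq_or_ne x 0 with rfl | hx
  · simp
  · exact (norm_normalize_eq_one_iff.mpr hx).le

section Normalize

variable {E : Type*} [NormedAddCommGroup E] [InnerProductSpace ℝ E]

theorem real_inner_normalize_eq_norm (x : E) : ⟪x, NormedSpace.normalize x⟫ = ‖x‖ := by
  rw [NormedSpace.normalize, real_inner_smul_right, real_inner_self_eq_norm_sq]
  rcases eq_or_ne ‖x‖ 0 with h | h
  · simp [h]
  · field_simp

theorem Pairwise.inner_normalize_eq_zero {ι : Type*} {v : ι → E}
    (hv : Pairwise fun i j => ⟪v i, v j⟫ = 0) :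
    Pairwise fun i j => ⟪NormedSpace.normalize (v i), NormedSpace.normalize (v j)⟫ = 0 :=
  fun i j hij => by
    simp [NormedSpace.normalize, real_inner_smul_left, real_inner_smul_right, hv hij]

end Normalize

section Schur

variable {ι κ : Type*} [Fintype ι] [Fintype κ]

theorem sum_sum_mul_rpow_one_div_rpow_le {r : ℝ} (hr : r ≠ 0) {α : ι → ℝ} {d : ι → κ → ℝ}
    (hα : ∀ i, 0 ≤ α i) (hd : ∀ i j, 0 ≤ d i j) (hrow : ∀ i, ∑ j, d i j ≤ 1) :
    ∑ i, ∑ j, (α i * d i j ^ (1 / r)) ^ r ≤ ∑ i, α i ^ r := calc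
  _ = ∑ i, α i ^ r * ∑ j, d i j := by
    simp only [Finset.mul_sum]
    refine Finset.sum_congr rfl fun i _ => Finset.sum_congr rfl fun j _ => ?_
    rw [Real.mul_rpow (hα i) (Real.rpow_nonneg (hd i j) _), ← Real.rpow_mul (hd i j),
      one_div_mul_cancel hr, Real.rpow_one]
  _ ≤ ∑ i, α i ^ r * 1 := by
    gcongr with i
    · exact Real.rpow_nonneg (hα i) r
    · exact hrow i
  _ = ∑ i, α i ^ r := by simp only [mul_one]

theorem sum_sum_mul_mul_le_of_sum_le_one {p q : ℝ}
    (hpq : p.HolderConjugate q) {α : ι → ℝ} {β : κ → ℝ} {d : ι → κ → ℝ}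
    (hα : ∀ i, 0 ≤ α i) (hβ : ∀ j, 0 ≤ β j) (hd : ∀ i j, 0 ≤ d i j)
    (hrow : ∀ i, ∑ j, d i j ≤ 1) (hcol : ∀ j, ∑ i, d i j ≤ 1) :
    ∑ i, ∑ j, α i * β j * d i j ≤ (∑ i, α i ^ p) ^ (1 / p) * (∑ j, β j ^ q) ^ (1 / q) := by
  have hsplit : ∀ i j, α i * β j * d i j = (α i * d i j ^ (1 / p)) * (β j * d i j ^ (1 / q)) := by
    intro i j
    rw [mul_mul_mul_comm, ← Real.rpow_add' (hd i j) (by simp [hpq.inv_add_inv_eq_one]),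
      one_div, one_div, hpq.inv_add_inv_eq_one, Real.rpow_one]
  have hf : ∀ z : ι × κ, 0 ≤ α z.1 * d z.1 z.2 ^ (1 / p) := fun z =>
    mul_nonneg (hα _) (Real.rpow_nonneg (hd _ _) _)
  have hg : ∀ z : ι × κ, 0 ≤ β z.2 * d z.1 z.2 ^ (1 / q) := fun z =>
    mul_nonneg (hβ _) (Real.rpow_nonneg (hd _ _) _)
  simp only [hsplit, ← Fintype.sum_prod_type']
  refine (Real.inner_le_Lp_mul_Lq_of_nonneg Finset.univ hpq (fun z _ => hf z)
    (fun z _ => hg z)).trans (mul_le_mul ?_ ?_ ?_ ?_)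
  · refine Real.rpow_le_rpow (Finset.sum_nonneg fun z _ => Real.rpow_nonneg (hf z) _) ?_
      (one_div_nonneg.mpr hpq.nonneg)
    rw [Fintype.sum_prod_type]
    exact sum_sum_mul_rpow_one_div_rpow_le hpq.ne_zero hα hd hrow
  · refine Real.rpow_le_rpow (Finset.sum_nonneg fun z _ => Real.rpow_nonneg (hg z) _) ?_
      (one_div_nonneg.mpr hpq.symm.nonneg)
    rw [Fintype.sum_prod_type_right]
    exact sum_sum_mul_rpow_one_div_rpow_le hpq.symm.ne_zero hβ (fun j i => hd i j) hcol
  · exact Real.rpow_nonneg (Finset.sum_nonneg fun z _ => Real.rpow_nonneg (hg z) _) _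
  · exact Real.rpow_nonneg (Finset.sum_nonneg fun i _ => Real.rpow_nonneg (hα i) _) _

theorem sum_sum_mul_mul_mul_le_of_sum_sq_le_one {p q : ℝ}
    (hpq : p.HolderConjugate q) {α : ι → ℝ} {β : κ → ℝ} {g s : ι → κ → ℝ}
    (hα : ∀ i, 0 ≤ α i) (hβ : ∀ j, 0 ≤ β j)
    (hg_row : ∀ i, ∑ j, g i j ^ 2 ≤ 1) (hg_col : ∀ j, ∑ i, g i j ^ 2 ≤ 1)
    (hs_row : ∀ i, ∑ j, s i j ^ 2 ≤ 1) (hs_col : ∀ j, ∑ i, s i j ^ 2 ≤ 1) :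
    ∑ i, ∑ j, α i * β j * (g i j * s i j) ≤
      (∑ i, α i ^ p) ^ (1 / p) * (∑ j, β j ^ q) ^ (1 / q) := by
  let d i j := (g i j ^ 2 + s i j ^ 2) / 2
  have hrow : ∀ i, ∑ j, d i j ≤ 1 := fun i => by
    simp only [d, ← Finset.sum_div, Finset.sum_add_distrib]; linarith [hg_row i, hs_row i]
  have hcol : ∀ j, ∑ i, d i j ≤ 1 := fun j => by
    simp only [d, ← Finset.sum_div, Finset.sum_add_distrib]; linarith [hg_col j, hs_col j]
  refine le_trans (Finset.sum_le_sum fun i _ => Finset.sum_le_sum fun j _ => ?_)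
    (sum_sum_mul_mul_le_of_sum_le_one hpq hα hβ (fun i j => by positivity) hrow hcol)
  have hgs : g i j * s i j ≤ d i j := by
    simp only [d]; linarith [two_mul_le_add_sq (g i j) (s i j)]
  exact mul_le_mul_of_nonneg_left hgs (mul_nonneg (hα i) (hβ j))

end Schur

section EuclideanSpace

variable {ι : Type*} [Fintype ι] [DecidableEq ι]

theorem OrthonormalBasis.sum_apply_mul_apply (φ : OrthonormalBasis ι ℝ (EuclideanSpace ℝ ι))
    (k l : ι) : ∑ a, φ a k * φ a l = if k = l then 1 else 0 := by
  simpa [EuclideanSpace.inner_single_left, EuclideanSpace.inner_single_right, eq_comm] using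
    φ.sum_inner_mul_inner (EuclideanSpace.single k 1) (EuclideanSpace.single l 1)

theorem OrthonormalBasis.sum_smul_sum_smul {M : Type*} [AddCommMonoid M] [Module ℝ M]
    (φ : OrthonormalBasis ι ℝ (EuclideanSpace ℝ ι)) (w : ι → M) (k : ι) :
    ∑ a, φ a k • ∑ l, φ a l • w l = w k := by
  simp only [Finset.smul_sum, smul_smul]
  rw [Finset.sum_comm]
  simp only [← Finset.sum_smul, φ.sum_apply_mul_apply, ite_smul, one_smul, zero_smul,
    Finset.sum_ite_eq, Finset.mem_univ, if_true]

theorem Orthonormal.sum_smul_orthonormalBasis {E : Type*} [NormedAddCommGroup E]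
    [InnerProductSpace ℝ E] {x : ι → E} (hx : Orthonormal ℝ x)
    (φ : OrthonormalBasis ι ℝ (EuclideanSpace ℝ ι)) :
    Orthonormal ℝ fun a => ∑ k, φ a k • x k := by
  rw [orthonormal_iff_ite]
  intro a c
  rw [hx.inner_sum, ← orthonormal_iff_ite.mp φ.orthonormal, PiLp.inner_apply]
  simp only [RCLike.inner_apply, conj_trivial, mul_comm]

theorem exists_orthonormalBasis_pairwise_inner_sum_smul_eq_zero {E : Type*}
    [NormedAddCommGroup E] [InnerProductSpace ℝ E] (w : ι → E) :
    ∃ φ : OrthonormalBasis ι ℝ (EuclideanSpace ℝ ι),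
      Pairwise fun a c => ⟪∑ k, φ a k • w k, ∑ k, φ c k • w k⟫ = 0 := by
  have hG := (Matrix.posSemidef_gram ℝ w).isHermitian
  refine ⟨hG.eigenvectorBasis, fun a c hac => ?_⟩
  have hmul := congrFun (hG.mulVec_eigenvectorBasis c)
  set φ := hG.eigenvectorBasis
  have hφ := φ.orthonormal.inner_eq_zero hac
  simp only [Matrix.mulVec, dotProduct, Matrix.gram_apply, Pi.smul_apply, smul_eq_mul] at hmul
  simp only [PiLp.inner_apply, RCLike.inner_apply, conj_trivial] at hφ
  calc ⟪∑ k, φ a k • w k, ∑ k, φ c k • w k⟫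
      = ∑ k, φ a k * ∑ l, ⟪w k, w l⟫ * φ c l := by
        simp only [sum_inner, inner_sum, real_inner_smul_left, real_inner_smul_right,
          Finset.mul_sum]
        rw [Finset.sum_comm]
        exact Finset.sum_congr rfl fun k _ => Finset.sum_congr rfl fun l _ => by ring
    _ = hG.eigenvalues c * ∑ k, φ c k * φ a k := by
        rw [Finset.mul_sum]
        exact Finset.sum_congr rfl fun k _ => by rw [hmul k]; ring
    _ = 0 := by rw [hφ, mul_zero]

end EuclideanSpace

section Bilinear

variable {E F : Type*} [NormedAddCommGroup E] [InnerProductSpace ℝ E]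
  [NormedAddCommGroup F] [InnerProductSpace ℝ F]

theorem ContinuousLinearMap.sum_sq_apply_div_opNorm_le_one {ι : Type*} [Fintype ι]
    (T : E →L[ℝ] F →L[ℝ] ℝ) {x : E} (hx : ‖x‖ ≤ 1) {w : ι → F}
    (hw : Pairwise fun i j => ⟪w i, w j⟫ = 0) (hw₁ : ∀ i, ‖w i‖ ≤ 1) :
    ∑ i, (T x (w i) / ‖T‖) ^ 2 ≤ 1 := by
  simp only [div_pow, ← Finset.sum_div]
  refine div_le_one_of_le₀ (((T x).sum_sq_apply_le_opNorm_sq hw hw₁).trans ?_) (by positivity)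
  simpa using pow_le_pow_left₀ (norm_nonneg _) (T.le_opNorm_of_le hx) 2

theorem ContinuousLinearMap.sum_apply_eq_sum_sum_inner_mul {ι : Type*} [Fintype ι]
    (T : E →L[ℝ] F →L[ℝ] ℝ) (φ χ : OrthonormalBasis ι ℝ (EuclideanSpace ℝ ι))
    {x : ι → E} {y : ι → F} {X : ι → E} {Y : ι → F}
    (hx : ∀ k, x k = ∑ a, φ a k • X a) (hy : ∀ k, y k = ∑ b, χ b k • Y b) :
    ∑ k, T (x k) (y k) = ∑ a, ∑ b, ⟪φ a, χ b⟫ * T (X a) (Y b) := calc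
  _ = ∑ k, ∑ b, ∑ a, χ b k * (φ a k * T (X a) (Y b)) := by
    simp only [hx, hy, map_sum, map_smul, sum_apply, smul_apply, smul_eq_mul, Finset.mul_sum]
  _ = ∑ b, ∑ a, ∑ k, χ b k * (φ a k * T (X a) (Y b)) := by
    rw [Finset.sum_comm]
    exact Finset.sum_congr rfl fun b _ => Finset.sum_comm
  _ = ∑ a, ∑ b, ∑ k, χ b k * (φ a k * T (X a) (Y b)) := Finset.sum_comm
  _ = ∑ a, ∑ b, ⟪φ a, χ b⟫ * T (X a) (Y b) := by
    refine Finset.sum_congr rfl fun a _ => Finset.sum_congr rfl fun b _ => ?_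
    simp only [PiLp.inner_apply, RCLike.inner_apply, conj_trivial, Finset.sum_mul]
    exact Finset.sum_congr rfl fun k _ => by ring

theorem ContinuousLinearMap.sum_sum_inner_mul_apply_le {ι κ G : Type*} [Fintype ι] [Fintype κ]
    [NormedAddCommGroup G] [InnerProductSpace ℝ G] (T : E →L[ℝ] F →L[ℝ] ℝ) {φ : ι → G}
    {χ : κ → G} (hφ : Orthonormal ℝ φ) (hχ : Orthonormal ℝ χ)
    {v : ι → E} {w : κ → F} (hv : Pairwise fun a c => ⟪v a, v c⟫ = 0)
    (hw : Pairwise fun b d => ⟪w b, w d⟫ = 0) {p q : ℝ} (hpq : p.HolderConjugate q) :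
    ∑ a, ∑ b, ⟪φ a, χ b⟫ * T (v a) (w b) ≤
      ‖T‖ * ((∑ a, ‖v a‖ ^ p) ^ (1 / p) * (∑ b, ‖w b‖ ^ q) ^ (1 / q)) := by
  rcases eq_or_ne T 0 with rfl | hT
  · simp [ContinuousLinearMap.opNorm_zero]
  have hsplit : ∀ a b, ⟪φ a, χ b⟫ * T (v a) (w b) =
      ‖T‖ * (‖v a‖ * ‖w b‖ * (⟪φ a, χ b⟫ *
        (T (NormedSpace.normalize (v a)) (NormedSpace.normalize (w b)) / ‖T‖))) := fun a b => by
    conv_lhs =>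
      rw [← NormedSpace.norm_smul_normalize (v a), ← NormedSpace.norm_smul_normalize (w b)]
    simp only [map_smul, smul_apply, smul_eq_mul]
    field_simp [(ContinuousLinearMap.opNorm_zero_iff T).not.mpr hT]
  simp only [hsplit, ← Finset.mul_sum]
  refine mul_le_mul_of_nonneg_left
    (sum_sum_mul_mul_mul_le_of_sum_sq_le_one hpq (fun a => norm_nonneg _) (fun b => norm_nonneg _)
      ?_ ?_ ?_ ?_) (norm_nonneg T)
  · intro a
    simpa [hφ.1 a] using (innerSL ℝ (φ a)).sum_sq_apply_le_opNorm_sq hχ.2 fun b => (hχ.1 b).le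
  · intro b
    simpa [real_inner_comm, hχ.1 b] using
      (innerSL ℝ (χ b)).sum_sq_apply_le_opNorm_sq hφ.2 fun a => (hφ.1 a).le
  · exact fun a => T.sum_sq_apply_div_opNorm_le_one (NormedSpace.norm_normalize_le_one _)
      hw.inner_normalize_eq_zero fun b => NormedSpace.norm_normalize_le_one _
  · intro b
    simpa [ContinuousLinearMap.opNorm_flip] using T.flip.sum_sq_apply_div_opNorm_le_one
      (NormedSpace.norm_normalize_le_one (w b)) hv.inner_normalize_eq_zero
      fun a => NormedSpace.norm_normalize_le_one _

end Bilinear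

section Schatten

variable {ι U H : Type*} [Fintype ι] [NormedAddCommGroup U] [InnerProductSpace ℝ U]
    [NormedAddCommGroup H] [InnerProductSpace ℝ H]

theorem ofReal_rpow_sum_le_schattenNorm (p : ℝ) (A : U →L[ℝ] H) {e : ι → U} {f : ι → H}
    (he : Orthonormal ℝ e) (hf : Orthonormal ℝ f) :
    ENNReal.ofReal ((∑ i, |⟪A (e i), f i⟫| ^ p) ^ (1 / p)) ≤ schattenNorm p A := by
  let σ := Fintype.equivFin ι
  rw [← σ.symm.sum_comp]
  exact le_iSup_of_le _ <| le_iSup_of_le (e ∘ σ.symm) <| le_iSup_of_le (f ∘ σ.symm) <|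
    le_iSup_of_le (he.comp _ σ.symm.injective) <|
      le_iSup_of_le (hf.comp _ σ.symm.injective) le_rfl

theorem ofReal_rpow_sum_norm_le_schattenNorm {p : ℝ} (hp : p ≠ 0) (A : U →L[ℝ] H) {e : ι → U}
    (he : Orthonormal ℝ e) (hAe : Pairwise fun i j => ⟪A (e i), A (e j)⟫ = 0) :
    ENNReal.ofReal ((∑ i, ‖A (e i)‖ ^ p) ^ (1 / p)) ≤ schattenNorm p A := by
  classical
  let S := {i // A (e i) ≠ 0}
  let f : S → H := fun i => NormedSpace.normalize (A (e i))
  have hf : Orthonormal ℝ f := ⟨fun i => NormedSpace.norm_normalize_eq_one_iff.mpr i.2,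
    fun i j hij => hAe.inner_normalize_eq_zero (Subtype.coe_injective.ne hij)⟩
  have hsum : ∑ i : S, |⟪A (e i), f i⟫| ^ p = ∑ i, ‖A (e i)‖ ^ p := by
    simp only [f, real_inner_normalize_eq_norm, abs_norm]
    rw [← Fintype.sum_subtype_add_sum_subtype (fun i => A (e i) ≠ 0), left_eq_add]
    exact Finset.sum_eq_zero fun i _ => by rw [not_not.mp i.2, norm_zero, Real.zero_rpow hp]
  rw [← hsum]
  exact ofReal_rpow_sum_le_schattenNorm p A (he.comp _ Subtype.val_injective) hf

theorem ofReal_sum_apply_le_schattenNorm_mul {p q : ℝ} (hpq : p.HolderConjugate q)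
    (T : H →L[ℝ] H →L[ℝ] ℝ) (A B : U →L[ℝ] H) {x y : ι → U}
    (hx : Orthonormal ℝ x) (hy : Orthonormal ℝ y) :
    ENNReal.ofReal (∑ k, T (A (x k)) (B (y k))) ≤
      ENNReal.ofReal ‖T‖ * schattenNorm p A * schattenNorm q B := by
  classical
  obtain ⟨φ, hφ⟩ := exists_orthonormalBasis_pairwise_inner_sum_smul_eq_zero fun k => A (x k)
  obtain ⟨χ, hχ⟩ := exists_orthonormalBasis_pairwise_inner_sum_smul_eq_zero fun k => B (y k)
  have hAφ : ∀ a, A (∑ k, φ a k • x k) = ∑ k, φ a k • A (x k) := fun a => by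
    simp only [map_sum, map_smul]
  have hBχ : ∀ b, B (∑ k, χ b k • y k) = ∑ k, χ b k • B (y k) := fun b => by
    simp only [map_sum, map_smul]
  have hsum := T.sum_apply_eq_sum_sum_inner_mul φ χ
    (fun k => (φ.sum_smul_sum_smul (fun k => A (x k)) k).symm)
    (fun k => (χ.sum_smul_sum_smul (fun k => B (y k)) k).symm)
  have hA := ofReal_rpow_sum_norm_le_schattenNorm hpq.ne_zero A
    (hx.sum_smul_orthonormalBasis φ) (by simpa only [hAφ] using hφ)
  have hB := ofReal_rpow_sum_norm_le_schattenNorm hpq.symm.ne_zero B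
    (hy.sum_smul_orthonormalBasis χ) (by simpa only [hBχ] using hχ)
  simp only [hAφ, hBχ] at hA hB
  calc ENNReal.ofReal (∑ k, T (A (x k)) (B (y k)))
      ≤ ENNReal.ofReal (‖T‖ * ((∑ a, ‖∑ k, φ a k • A (x k)‖ ^ p) ^ (1 / p) *
          (∑ b, ‖∑ k, χ b k • B (y k)‖ ^ q) ^ (1 / q))) :=
        ENNReal.ofReal_le_ofReal <| hsum ▸ T.sum_sum_inner_mul_apply_le φ.orthonormal
          χ.orthonormal hφ hχ hpq
    _ ≤ ENNReal.ofReal ‖T‖ * schattenNorm p A * schattenNorm q B := by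
        rw [ENNReal.ofReal_mul (norm_nonneg T), ENNReal.ofReal_mul (by positivity), ← mul_assoc]
        gcongr

end Schatten

theorem stmt_9_general {U H ι : Type*}
    [NormedAddCommGroup U] [InnerProductSpace ℝ U]
    [NormedAddCommGroup H] [InnerProductSpace ℝ H]
    (b : HilbertBasis ι ℝ U)
    (r : ℝ) (hr : 0 < r)
    (T : H →L[ℝ] H →L[ℝ] ℝ) (A B : U →L[ℝ] H) :
    ∑' u : ι, ENNReal.ofReal |T (A (b u)) (B (b u))| ≤
      ENNReal.ofReal ‖T‖ * schattenNorm (1 + r) A * schattenNorm (1 + 1/r) B := by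
  have hpq : (1 + r).HolderConjugate (1 + 1 / r) :=
    Real.holderConjugate_iff.mpr ⟨by linarith, by field_simp; ring⟩
  rw [ENNReal.tsum_eq_iSup_sum]
  refine iSup_le fun s => ?_
  let t (u : s) := T (A (b u)) (B (b u))
  let x (u : s) := if 0 ≤ t u then b u else -b u
  have hb : Orthonormal ℝ fun u : s => b u := b.orthonormal.comp _ Subtype.val_injective
  have hx : Orthonormal ℝ x := hb.orthonormal_of_forall_eq_or_eq_neg fun u => by
    by_cases h : 0 ≤ t u <;> simp [x, h]
  have habs : ∀ u, |t u| = T (A (x u)) (B (b u)) := fun u => by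
    by_cases h : 0 ≤ t u
    · simp [x, h, abs_of_nonneg h, t]
    · simp [x, h, abs_of_neg (not_le.mp h), t]
  calc ∑ u ∈ s, ENNReal.ofReal |T (A (b u)) (B (b u))|
      = ENNReal.ofReal (∑ u : s, T (A (x u)) (B (b u))) := by
        rw [← Finset.sum_coe_sort s, ← ENNReal.ofReal_sum_of_nonneg fun u _ => abs_nonneg (t u)]
        simp only [t, habs]
    _ ≤ _ := ofReal_sum_apply_le_schattenNorm_mul hpq T A B hx hb

/-- Hölder inequality for Schatten classes: if `T` is a continuous bilinear form on the
separable real Hilbert space `H`, `A ∈ L_{1+r}(U,H)` and `B ∈ L_{1+1/r}(U,H)`, and `𝕌` is an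
orthonormal basis of `U`, then `Σ_{u ∈ 𝕌} |T(Au, Bu)| ≤ ‖T‖ ‖A‖_{S_{1+r}} ‖B‖_{S_{1+1/r}}`. -/
theorem stmt_9 {U H ι : Type*}
    [NormedAddCommGroup U] [InnerProductSpace ℝ U] [CompleteSpace U]
    [NormedAddCommGroup H] [InnerProductSpace ℝ H] [CompleteSpace H]
    [Countable ι] (b : HilbertBasis ι ℝ U)
    (r : ℝ) (hr : 0 < r)
    (T : H →L[ℝ] H →L[ℝ] ℝ) (A B : U →L[ℝ] H)
    (hA : schattenNorm (1 + r) A ≠ ⊤) (hB : schattenNorm (1 + 1/r) B ≠ ⊤) :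
    ∑' u : ι, ENNReal.ofReal |T (A (b u)) (B (b u))| ≤
      ENNReal.ofReal ‖T‖ * schattenNorm (1 + r) A * schattenNorm (1 + 1/r) B :=
  stmt_9_general b r hr T A B
end

section
/- In the setting of the abstract wave equation, let 𝚲 be the diagonal operator on 𝐇_0 acting as multiplication by |λ_h|^{1/2} in each coordinate. Then for every α ∈ [0,1] and t > 0, t^(-α) ‖𝚲^(-α)(Id - e^{t𝐀})‖_{L(𝐇_0)} ≤ √2 · sup_{s>0} s^(-α)|1 - e^{is}| ≤ 2^{3/2}, where e^{t𝐀} is the wave semigroup. -/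
/-!
In the eigenbasis, `𝚲^(-α)(Id - e^{t𝐀})` is block diagonal: on the plane of the `i`-th mode it is
`μᵢ^(-α)` times `Id` minus the rotation by `t μᵢ`, i.e. multiplication by
`μᵢ^(-α) (1 - e^{-i t μᵢ})` on `ℂ ≅ ℝ²`. Hence its norm is `sup_i μᵢ^(-α) |1 - e^{i t μᵢ}|`,
and the substitution `s = t μᵢ` bounds this by `t^α S`, with `S = sup_{s>0} s^(-α) |1 - e^{is}|`.
Finally `|1 - e^{is}| ≤ min s 2` gives `S ≤ 2`; the factor `√2` is slack.
-/

open scoped RealInnerProductSpace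

namespace HilbertBasis

variable {ι κ E : Type*} [NormedAddCommGroup E]

theorem ext_continuousLinearMap {𝕜 F : Type*} [RCLike 𝕜] [InnerProductSpace 𝕜 E]
    [TopologicalSpace F] [AddCommMonoid F] [Module 𝕜 F] [T2Space F]
    (b : HilbertBasis ι 𝕜 E) {f g : E →L[𝕜] F} (h : ∀ j, f (b j) = g (b j)) : f = g :=
  ContinuousLinearMap.ext_on (Submodule.dense_iff_topologicalClosure_eq_top.mpr b.dense_span)
    (by rintro _ ⟨j, rfl⟩; exact h j)

variable [InnerProductSpace ℝ E]

theorem hasSum_sum_sq_inner_fiberwise [Fintype κ] (b : HilbertBasis (ι × κ) ℝ E) (y : E) :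
    HasSum (fun i => ∑ k, ⟪b (i, k), y⟫ ^ 2) (‖y‖ ^ 2) := by
  have h : HasSum (fun p => ⟪b p, y⟫ ^ 2) (‖y‖ ^ 2) := by
    simpa only [real_inner_comm (b _) y, ← pow_two, real_inner_self_eq_norm_sq]
      using b.hasSum_inner_mul_inner y y
  exact h.prod_fiberwise fun i => hasSum_fintype _

section RotationBlocks

variable (b : HilbertBasis (ι × Fin 2) ℝ E) {D : E →L[ℝ] E} {a c : ι → ℝ}
  (hD0 : ∀ i, D (b (i, 0)) = a i • b (i, 0) + c i • b (i, 1))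
  (hD1 : ∀ i, D (b (i, 1)) = (-c i) • b (i, 0) + a i • b (i, 1))
include hD0 hD1

theorem inner_zero_apply_of_rotation_blocks (i : ι) (x : E) :
    ⟪b (i, 0), D x⟫ = a i * ⟪b (i, 0), x⟫ - c i * ⟪b (i, 1), x⟫ := by
  have key : (innerSL ℝ (b (i, 0))).comp D =
      a i • innerSL ℝ (b (i, 0)) - c i • innerSL ℝ (b (i, 1)) := by
    refine b.ext_continuousLinearMap fun ⟨j, k⟩ => ?_
    classical
    have hon := orthonormal_iff_ite.mp b.orthonormal
    by_cases hij : i = j <;> fin_cases k <;>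
      simp [hD0, hD1, inner_add_right, inner_smul_right, hon, hij, b.orthonormal.1]
  simpa using congr($key x)

theorem inner_one_apply_of_rotation_blocks (i : ι) (x : E) :
    ⟪b (i, 1), D x⟫ = c i * ⟪b (i, 0), x⟫ + a i * ⟪b (i, 1), x⟫ := by
  have key : (innerSL ℝ (b (i, 1))).comp D =
      c i • innerSL ℝ (b (i, 0)) + a i • innerSL ℝ (b (i, 1)) := by
    refine b.ext_continuousLinearMap fun ⟨j, k⟩ => ?_
    classical
    have hon := orthonormal_iff_ite.mp b.orthonormal
    by_cases hij : i = j <;> fin_cases k <;>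
      simp [hD0, hD1, inner_add_right, inner_smul_right, hon, hij, b.orthonormal.1]
  simpa using congr($key x)

theorem opNorm_le_of_rotation_blocks {C : ℝ} (hC : 0 ≤ C)
    (hac : ∀ i, a i ^ 2 + c i ^ 2 ≤ C ^ 2) : ‖D‖ ≤ C := by
  refine D.opNorm_le_bound hC fun x => ?_
  have hsq : ‖D x‖ ^ 2 ≤ (C * ‖x‖) ^ 2 := by
    rw [mul_pow]
    refine hasSum_le (fun i => ?_) (b.hasSum_sum_sq_inner_fiberwise (D x))
      ((b.hasSum_sum_sq_inner_fiberwise x).mul_left (C ^ 2))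
    simp only [Fin.sum_univ_two, inner_zero_apply_of_rotation_blocks b hD0 hD1,
      inner_one_apply_of_rotation_blocks b hD0 hD1]
    calc (a i * ⟪b (i, 0), x⟫ - c i * ⟪b (i, 1), x⟫) ^ 2
          + (c i * ⟪b (i, 0), x⟫ + a i * ⟪b (i, 1), x⟫) ^ 2
        = (a i ^ 2 + c i ^ 2) * (⟪b (i, 0), x⟫ ^ 2 + ⟪b (i, 1), x⟫ ^ 2) := by ring
      _ ≤ C ^ 2 * (⟪b (i, 0), x⟫ ^ 2 + ⟪b (i, 1), x⟫ ^ 2) := by gcongr; exact hac i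
  exact (pow_le_pow_iff_left₀ (norm_nonneg _) (by positivity) two_ne_zero).mp hsq

end RotationBlocks

end HilbertBasis

theorem norm_one_sub_exp_ofReal_mul_I_sq (s : ℝ) :
    ‖1 - Complex.exp (s * Complex.I)‖ ^ 2 = (1 - Real.cos s) ^ 2 + Real.sin s ^ 2 := by
  rw [Complex.sq_norm, Complex.normSq_apply]
  simp only [Complex.sub_re, Complex.sub_im, Complex.one_re, Complex.one_im,
    Complex.exp_ofReal_mul_I_re, Complex.exp_ofReal_mul_I_im]
  ring

theorem norm_one_sub_exp_ofReal_mul_I_le_two (s : ℝ) : ‖1 - Complex.exp (s * Complex.I)‖ ≤ 2 :=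
  calc ‖1 - Complex.exp (s * Complex.I)‖ ≤ ‖(1 : ℂ)‖ + ‖Complex.exp (s * Complex.I)‖ :=
        norm_sub_le _ _
    _ = 2 := by rw [norm_one, Complex.norm_exp_ofReal_mul_I]; norm_num

theorem norm_one_sub_exp_ofReal_mul_I_le_norm (s : ℝ) :
    ‖1 - Complex.exp (s * Complex.I)‖ ≤ ‖s‖ := by
  rw [norm_sub_rev, mul_comm]
  exact Real.norm_exp_I_mul_ofReal_sub_one_le

theorem rpow_neg_mul_norm_one_sub_exp_ofReal_mul_I_le_two {α s : ℝ} (hα : α ∈ Set.Icc (0 : ℝ) 1)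
    (hs : 0 < s) : s ^ (-α) * ‖1 - Complex.exp (s * Complex.I)‖ ≤ 2 := by
  rcases le_total s 1 with hs1 | hs1
  · calc s ^ (-α) * ‖1 - Complex.exp (s * Complex.I)‖ ≤ s ^ (-α) * s := by
          gcongr
          simpa [abs_of_pos hs] using norm_one_sub_exp_ofReal_mul_I_le_norm s
      _ = s ^ (1 - α) := by rw [sub_eq_neg_add, Real.rpow_add hs, Real.rpow_one]
      _ ≤ 1 := Real.rpow_le_one hs.le hs1 (by linarith [hα.2])
      _ ≤ 2 := one_le_two
  · calc s ^ (-α) * ‖1 - Complex.exp (s * Complex.I)‖ ≤ 1 * 2 := by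
          gcongr
          · exact Real.rpow_le_one_of_one_le_of_nonpos hs1 (by linarith [hα.1])
          · exact norm_one_sub_exp_ofReal_mul_I_le_two s
      _ = 2 := one_mul 2

def expIHolderQuotients (α : ℝ) : Set ℝ :=
  {x : ℝ | ∃ s : ℝ, 0 < s ∧ x = s ^ (-α) * ‖1 - Complex.exp (s * Complex.I)‖}

theorem bddAbove_expIHolderQuotients {α : ℝ} (hα : α ∈ Set.Icc (0 : ℝ) 1) :
    BddAbove (expIHolderQuotients α) :=
  ⟨2, by rintro _ ⟨s, hs, rfl⟩; exact rpow_neg_mul_norm_one_sub_exp_ofReal_mul_I_le_two hα hs⟩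

theorem sSup_expIHolderQuotients_le_two {α : ℝ} (hα : α ∈ Set.Icc (0 : ℝ) 1) :
    sSup (expIHolderQuotients α) ≤ 2 :=
  csSup_le ⟨_, 1, one_pos, rfl⟩
    (by rintro _ ⟨s, hs, rfl⟩; exact rpow_neg_mul_norm_one_sub_exp_ofReal_mul_I_le_two hα hs)

theorem sSup_expIHolderQuotients_nonneg (α : ℝ) : 0 ≤ sSup (expIHolderQuotients α) :=
  Real.sSup_nonneg (by rintro _ ⟨s, hs, rfl⟩; positivity)

theorem rpow_neg_mul_norm_one_sub_exp_le_rpow_mul_sSup {α t μ : ℝ}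
    (hα : α ∈ Set.Icc (0 : ℝ) 1) (ht : 0 < t) (hμ : 0 < μ) :
    μ ^ (-α) * ‖1 - Complex.exp ((t * μ : ℝ) * Complex.I)‖
      ≤ t ^ α * sSup (expIHolderQuotients α) := by
  have hμα : μ ^ (-α) = t ^ α * (t * μ) ^ (-α) := by
    rw [Real.mul_rpow ht.le hμ.le, ← mul_assoc, ← Real.rpow_add ht, add_neg_cancel,
      Real.rpow_zero, one_mul]
  rw [hμα, mul_assoc]
  gcongr
  exact le_csSup (bddAbove_expIHolderQuotients hα) ⟨t * μ, mul_pos ht hμ, rfl⟩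

theorem stmt_12_general {E ι : Type*} [NormedAddCommGroup E] [InnerProductSpace ℝ E]
    (b : HilbertBasis (ι × Fin 2) ℝ E) (μ : ι → ℝ) (hμ : ∀ i, 0 < μ i)
    (α t : ℝ) (hα : α ∈ Set.Icc (0:ℝ) 1) (ht : 0 < t)
    (D : E →L[ℝ] E)
    (hD0 : ∀ i : ι, D (b (i, 0)) =
      (μ i) ^ (-α) • ((1 - Real.cos (t * μ i)) • (b (i, 0) : E)
        + Real.sin (t * μ i) • (b (i, 1) : E)))
    (hD1 : ∀ i : ι, D (b (i, 1)) =
      (μ i) ^ (-α) • ((-Real.sin (t * μ i)) • (b (i, 0) : E)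
        + (1 - Real.cos (t * μ i)) • (b (i, 1) : E))) :
    t ^ (-α) * ‖D‖ ≤
        Real.sqrt 2 *
          sSup {x : ℝ | ∃ s : ℝ, 0 < s ∧
            x = s ^ (-α) * ‖1 - Complex.exp (s * Complex.I)‖} ∧
      Real.sqrt 2 *
          sSup {x : ℝ | ∃ s : ℝ, 0 < s ∧
            x = s ^ (-α) * ‖1 - Complex.exp (s * Complex.I)‖} ≤
        2 ^ ((3:ℝ)/2) := by
  set S := sSup (expIHolderQuotients α)
  have hS : 0 ≤ S := sSup_expIHolderQuotients_nonneg α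
  have hnorm : ‖D‖ ≤ t ^ α * S := by
    refine b.opNorm_le_of_rotation_blocks (a := fun i => μ i ^ (-α) * (1 - Real.cos (t * μ i)))
      (c := fun i => μ i ^ (-α) * Real.sin (t * μ i)) (fun i => ?_) (fun i => ?_)
      (by positivity) (fun i => ?_)
    · rw [hD0, smul_add, smul_smul, smul_smul]
    · rw [hD1, smul_add, smul_smul, smul_smul, mul_neg]
    · rw [mul_pow, mul_pow, ← mul_add, ← norm_one_sub_exp_ofReal_mul_I_sq, ← mul_pow]
      exact pow_le_pow_left₀ (mul_nonneg (Real.rpow_nonneg (hμ i).le _) (norm_nonneg _))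
        (rpow_neg_mul_norm_one_sub_exp_le_rpow_mul_sSup hα ht (hμ i)) 2
  have hscaled : t ^ (-α) * ‖D‖ ≤ S :=
    calc t ^ (-α) * ‖D‖ ≤ t ^ (-α) * (t ^ α * S) := by gcongr
      _ = S := by rw [← mul_assoc, ← Real.rpow_add ht, neg_add_cancel, Real.rpow_zero, one_mul]
  refine ⟨hscaled.trans (le_mul_of_one_le_left hS (Real.one_le_sqrt.mpr one_le_two)), ?_⟩
  calc √2 * S ≤ √2 * 2 := by gcongr; exact sSup_expIHolderQuotients_le_two hα
    _ = 2 ^ ((3:ℝ)/2) := by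
      rw [show (3:ℝ)/2 = 1/2 + 1 by norm_num, Real.rpow_add two_pos, Real.rpow_one,
        ← Real.sqrt_eq_rpow]

/-- Hölder-type bound for the wave group: for `α ∈ [0,1]` and `t > 0`,
`t^(-α) ‖𝚲^(-α)(Id - e^{t𝐀})‖_{L(𝐇₀)} ≤ √2 · sup_{s>0} s^(-α)|1 - e^{is}| ≤ 2^{3/2}`.

The space `𝐇₀` is modelled by a real Hilbert space `E` with Hilbert basis indexed by
`ι × Fin 2` (one block per spectral mode, with `μ i = |λ_i|^{1/2} > 0`); the operator
`D = 𝚲^(-α)(Id - e^{t𝐀})` acts blockwise as `(μ i)^(-α)` times `Id₂` minus the rotation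
by the angle `t μ i`. -/
theorem stmt_12 {E ι : Type*} [NormedAddCommGroup E] [InnerProductSpace ℝ E]
    [CompleteSpace E]
    (b : HilbertBasis (ι × Fin 2) ℝ E) (μ : ι → ℝ) (hμ : ∀ i, 0 < μ i)
    (α t : ℝ) (hα : α ∈ Set.Icc (0:ℝ) 1) (ht : 0 < t)
    (D : E →L[ℝ] E)
    (hD0 : ∀ i : ι, D (b (i, 0)) =
      (μ i) ^ (-α) • ((1 - Real.cos (t * μ i)) • (b (i, 0) : E)
        + Real.sin (t * μ i) • (b (i, 1) : E)))
    (hD1 : ∀ i : ι, D (b (i, 1)) =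
      (μ i) ^ (-α) • ((-Real.sin (t * μ i)) • (b (i, 0) : E)
        + (1 - Real.cos (t * μ i)) • (b (i, 1) : E))) :
    t ^ (-α) * ‖D‖ ≤
        Real.sqrt 2 *
          sSup {x : ℝ | ∃ s : ℝ, 0 < s ∧
            x = s ^ (-α) * ‖1 - Complex.exp (s * Complex.I)‖} ∧
      Real.sqrt 2 *
          sSup {x : ℝ | ∃ s : ℝ, 0 < s ∧
            x = s ^ (-α) * ‖1 - Complex.exp (s * Complex.I)‖} ≤
        2 ^ ((3:ℝ)/2) :=
  stmt_12_general b μ hμ α t hα ht D hD0 hD1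
end
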